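/- arXiv:2101.00278 — 4 statements merged into one kernel-verified Lean document; each statement's English description precedes it below -/
import Mathlib

section
/- Let S, E, I_S, I_N, T : ℝ → ℝ be differentiable functions on [0, t_f] satisfying the TB model with stigmatization, with strictly positive initial values S(0), E(0), I_S(0), I_N(0), T(0) > 0, and suppose N(t) = S(t)+E(t)+I_S(t)+I_N(t)+T(t) > 0 for all t ∈ [0, t_f]. Then S(t) > 0, E(t) > 0, I_S(t) > 0, I_N(t) > 0 and T(t) > 0 for all t ∈ [0, t_f]; i.e., the nonnegative orthant is positively invariant for the flow. -/
lemma gronwall_pos (C tf : ℝ) (X D : ℝ → ℝ) (htf : 0 ≤ tf)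
    (hcont : ContinuousOn X (Set.Icc 0 tf))
    (hX : ∀ t ∈ Set.Ioo 0 tf, HasDerivAt X (D t) t)
    (hD : ∀ t ∈ Set.Ioo 0 tf, -C * X t ≤ D t)
    (h0 : 0 < X 0) : ∀ t ∈ Set.Icc 0 tf, 0 < X t := by
  have key : MonotoneOn (fun s => X s * Real.exp (C * s)) (Set.Icc 0 tf) := by
    apply monotoneOn_of_deriv_nonneg (convex_Icc 0 tf)
    · exact hcont.mul (Real.continuous_exp.comp (continuous_const.mul continuous_id)).continuousOn
    · intro s hs
      rw [interior_Icc] at hs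
      exact ((hX s hs).mul (((hasDerivAt_id s).const_mul C).exp)).differentiableAt.differentiableWithinAt
    · intro s hs
      rw [interior_Icc] at hs
      have hd : HasDerivAt (fun s => X s * Real.exp (C * s))
          (D s * Real.exp (C * s) + X s * (Real.exp (C * s) * (C * 1))) s :=
        (hX s hs).mul (((hasDerivAt_id s).const_mul C).exp)
      rw [hd.deriv]
      have h1 := hD s hs
      have h2 : (0:ℝ) < Real.exp (C * s) := Real.exp_pos _
      nlinarith [mul_le_mul_of_nonneg_right h1 h2.le]
  intro t ht
  have hmono := key (Set.left_mem_Icc.2 htf) ht ht.1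
  have h2 : (0:ℝ) < Real.exp (C * t) := Real.exp_pos _
  have h3 : (0:ℝ) < X 0 * Real.exp (C * 0) := mul_pos h0 (Real.exp_pos _)
  simp only at hmono
  by_contra hx
  push_neg at hx
  have : X t * Real.exp (C * t) ≤ 0 := mul_nonpos_of_nonpos_of_nonneg hx h2.le
  linarith

set_option maxHeartbeats 1000000 in
/-- Positive invariance of the nonnegative orthant for the TB model with
stigmatization: solutions with strictly positive initial data stay strictly
positive on `[0, t_f]`. -/
theorem tb_positive_invariance
    (b Λ μ k d r σ p α tf : ℝ)
    (hb : 0 < b) (hΛ : 0 < Λ) (hμ : 0 < μ) (hk : 0 < k) (hd : 0 < d) (hr : 0 < r)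
    (hσ : σ ∈ Set.Ioc (0:ℝ) 1) (hp : 0 ≤ p) (hα : α ∈ Set.Icc (0:ℝ) 1)
    (htf : 0 ≤ tf)
    (S E IS IN T I N : ℝ → ℝ)
    (hI : ∀ t, I t = IS t + IN t)
    (hN : ∀ t, N t = S t + E t + IS t + IN t + T t)
    (hNpos : ∀ t ∈ Set.Icc 0 tf, 0 < N t)
    (hS : ∀ t ∈ Set.Icc 0 tf,
      HasDerivAt S (Λ - b * S t * (I t / N t) - μ * S t) t)
    (hE : ∀ t ∈ Set.Icc 0 tf,
      HasDerivAt E (b * S t * (I t / N t) - p * b * E t * (I t / N t)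
        - (μ + k) * E t + σ * b * T t * (I t / N t)) t)
    (hIS : ∀ t ∈ Set.Icc 0 tf,
      HasDerivAt IS (α * p * b * E t * (I t / N t) + α * k * E t
        - (μ + r + d) * IS t) t)
    (hIN : ∀ t ∈ Set.Icc 0 tf,
      HasDerivAt IN ((1 - α) * p * b * E t * (I t / N t) + (1 - α) * k * E t
        - (μ + d) * IN t) t)
    (hT : ∀ t ∈ Set.Icc 0 tf,
      HasDerivAt T (r * IS t - σ * b * T t * (I t / N t) - μ * T t) t)
    (hS0 : 0 < S 0) (hE0 : 0 < E 0) (hIS0 : 0 < IS 0) (hIN0 : 0 < IN 0)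
    (hT0 : 0 < T 0) :
    ∀ t ∈ Set.Icc 0 tf, 0 < S t ∧ 0 < E t ∧ 0 < IS t ∧ 0 < IN t ∧ 0 < T t := by
  obtain ⟨hσ0, hσ1⟩ := hσ
  obtain ⟨hα0, hα1⟩ := hα
  have hScont : ContinuousOn S (Set.Icc 0 tf) :=
    fun t ht => ((hS t ht).continuousAt).continuousWithinAt
  have hEcont : ContinuousOn E (Set.Icc 0 tf) :=
    fun t ht => ((hE t ht).continuousAt).continuousWithinAt
  have hIScont : ContinuousOn IS (Set.Icc 0 tf) :=
    fun t ht => ((hIS t ht).continuousAt).continuousWithinAt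
  have hINcont : ContinuousOn IN (Set.Icc 0 tf) :=
    fun t ht => ((hIN t ht).continuousAt).continuousWithinAt
  have hTcont : ContinuousOn T (Set.Icc 0 tf) :=
    fun t ht => ((hT t ht).continuousAt).continuousWithinAt
  by_contra hcon
  push_neg at hcon
  obtain ⟨t0, ht0, hbad0⟩ := hcon
  set Bad : Set ℝ :=
    (Set.Icc 0 tf ∩ S ⁻¹' Set.Iic 0) ∪ (Set.Icc 0 tf ∩ E ⁻¹' Set.Iic 0) ∪
    (Set.Icc 0 tf ∩ IS ⁻¹' Set.Iic 0) ∪ (Set.Icc 0 tf ∩ IN ⁻¹' Set.Iic 0) ∪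
    (Set.Icc 0 tf ∩ T ⁻¹' Set.Iic 0) with hBadDef
  have hmemBad : ∀ u, u ∈ Bad ↔ u ∈ Set.Icc 0 tf ∧
      (S u ≤ 0 ∨ E u ≤ 0 ∨ IS u ≤ 0 ∨ IN u ≤ 0 ∨ T u ≤ 0) := by
    intro u
    simp only [hBadDef, Set.mem_union, Set.mem_inter_iff, Set.mem_preimage, Set.mem_Iic]
    tauto
  have hBadIcc : Bad ⊆ Set.Icc 0 tf := fun u hu => ((hmemBad u).1 hu).1
  have hBadne : Bad.Nonempty := by
    refine ⟨t0, (hmemBad t0).2 ⟨ht0, ?_⟩⟩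
    by_contra h
    push_neg at h
    exact absurd (hbad0 h.1 h.2.1 h.2.2.1 h.2.2.2.1) (not_le.2 h.2.2.2.2)
  have hclosed : IsClosed Bad := by
    have hc : IsClosed (Set.Icc (0:ℝ) tf) := isClosed_Icc
    have hI0 : IsClosed (Set.Iic (0:ℝ)) := isClosed_Iic
    exact ((((hScont.preimage_isClosed_of_isClosed hc hI0).union
      (hEcont.preimage_isClosed_of_isClosed hc hI0)).union
      (hIScont.preimage_isClosed_of_isClosed hc hI0)).union
      (hINcont.preimage_isClosed_of_isClosed hc hI0)).union
      (hTcont.preimage_isClosed_of_isClosed hc hI0)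
  have hbdd : BddBelow Bad := ⟨0, fun u hu => (hBadIcc hu).1⟩
  set τ := sInf Bad with hτdef
  have hτmem : τ ∈ Bad := hclosed.csInf_mem hBadne hbdd
  have hτIcc : τ ∈ Set.Icc 0 tf := hBadIcc hτmem
  have hτ0 : 0 ≤ τ := hτIcc.1
  have hτtf : τ ≤ tf := hτIcc.2
  -- positivity on (0, τ)
  have hposIoo : ∀ t ∈ Set.Ioo 0 τ,
      0 < S t ∧ 0 < E t ∧ 0 < IS t ∧ 0 < IN t ∧ 0 < T t := by
    intro t ht
    have htIcc : t ∈ Set.Icc 0 tf := ⟨ht.1.le, ht.2.le.trans hτtf⟩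
    have hnot : t ∉ Bad := fun h => absurd (csInf_le hbdd h) (not_le.2 ht.2)
    have h2 : ¬ (S t ≤ 0 ∨ E t ≤ 0 ∨ IS t ≤ 0 ∨ IN t ≤ 0 ∨ T t ≤ 0) :=
      fun h => hnot ((hmemBad t).2 ⟨htIcc, h⟩)
    push_neg at h2
    exact ⟨h2.1, h2.2.1, h2.2.2.1, h2.2.2.2.1, h2.2.2.2.2⟩
  have hIoosub : Set.Ioo 0 τ ⊆ Set.Icc 0 tf :=
    fun t ht => ⟨ht.1.le, ht.2.le.trans hτtf⟩
  have hq : ∀ t ∈ Set.Ioo 0 τ, 0 ≤ I t / N t ∧ I t / N t ≤ 1 := by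
    intro t ht
    obtain ⟨hSt, hEt, hISt, hINt, hTt⟩ := hposIoo t ht
    have hNt := hNpos t (hIoosub ht)
    constructor
    · apply div_nonneg _ hNt.le
      rw [hI]; linarith
    · rw [div_le_one hNt, hI t, hN t]; linarith
  set C : ℝ := b * (1 + p + σ) + μ + k + r + d with hCdef
  have hsub : ContinuousOn S (Set.Icc 0 τ) := hScont.mono (Set.Icc_subset_Icc_right hτtf)
  have hτself : τ ∈ Set.Icc 0 τ := Set.right_mem_Icc.2 hτ0
  have hSτ : 0 < S τ := by
    refine gronwall_pos C τ S (fun t => Λ - b * S t * (I t / N t) - μ * S t) hτ0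
      hsub (fun t ht => hS t (hIoosub ht)) ?_ hS0 τ hτself
    intro t ht
    obtain ⟨hSt, hEt, hISt, hINt, hTt⟩ := hposIoo t ht
    obtain ⟨hq0, hq1⟩ := hq t ht
    nlinarith [mul_nonneg (mul_nonneg hb.le hSt.le) (sub_nonneg.2 hq1),
      mul_nonneg (mul_nonneg hp hb.le) hSt.le,
      mul_nonneg (mul_nonneg hσ0.le hb.le) hSt.le,
      mul_nonneg hk.le hSt.le, mul_nonneg hr.le hSt.le, mul_nonneg hd.le hSt.le]
  have hEτ : 0 < E τ := by
    refine gronwall_pos C τ E (fun t => b * S t * (I t / N t) - p * b * E t * (I t / N t)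
        - (μ + k) * E t + σ * b * T t * (I t / N t)) hτ0
      (hEcont.mono (Set.Icc_subset_Icc_right hτtf)) (fun t ht => hE t (hIoosub ht)) ?_ hE0 τ hτself
    intro t ht
    obtain ⟨hSt, hEt, hISt, hINt, hTt⟩ := hposIoo t ht
    obtain ⟨hq0, hq1⟩ := hq t ht
    nlinarith [mul_nonneg (mul_nonneg (mul_nonneg hp hb.le) hEt.le) (sub_nonneg.2 hq1),
      mul_nonneg (mul_nonneg hb.le hSt.le) hq0,
      mul_nonneg (mul_nonneg (mul_nonneg hσ0.le hb.le) hTt.le) hq0,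
      mul_nonneg hb.le hEt.le, mul_nonneg (mul_nonneg hσ0.le hb.le) hEt.le,
      mul_nonneg hr.le hEt.le, mul_nonneg hd.le hEt.le]
  have hISτ : 0 < IS τ := by
    refine gronwall_pos C τ IS (fun t => α * p * b * E t * (I t / N t) + α * k * E t
        - (μ + r + d) * IS t) hτ0
      (hIScont.mono (Set.Icc_subset_Icc_right hτtf)) (fun t ht => hIS t (hIoosub ht)) ?_ hIS0 τ hτself
    intro t ht
    obtain ⟨hSt, hEt, hISt, hINt, hTt⟩ := hposIoo t ht
    obtain ⟨hq0, hq1⟩ := hq t ht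
    nlinarith [mul_nonneg (mul_nonneg (mul_nonneg (mul_nonneg hα0 hp) hb.le) hEt.le) hq0,
      mul_nonneg (mul_nonneg hα0 hk.le) hEt.le,
      mul_nonneg hb.le hISt.le, mul_nonneg (mul_nonneg hp hb.le) hISt.le,
      mul_nonneg (mul_nonneg hσ0.le hb.le) hISt.le, mul_nonneg hk.le hISt.le]
  have hINτ : 0 < IN τ := by
    refine gronwall_pos C τ IN (fun t => (1 - α) * p * b * E t * (I t / N t)
        + (1 - α) * k * E t - (μ + d) * IN t) hτ0
      (hINcont.mono (Set.Icc_subset_Icc_right hτtf)) (fun t ht => hIN t (hIoosub ht)) ?_ hIN0 τ hτself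
    intro t ht
    obtain ⟨hSt, hEt, hISt, hINt, hTt⟩ := hposIoo t ht
    obtain ⟨hq0, hq1⟩ := hq t ht
    nlinarith [mul_nonneg (mul_nonneg (mul_nonneg (mul_nonneg (sub_nonneg.2 hα1) hp) hb.le) hEt.le) hq0,
      mul_nonneg (mul_nonneg (sub_nonneg.2 hα1) hk.le) hEt.le,
      mul_nonneg hb.le hINt.le, mul_nonneg (mul_nonneg hp hb.le) hINt.le,
      mul_nonneg (mul_nonneg hσ0.le hb.le) hINt.le, mul_nonneg hk.le hINt.le,
      mul_nonneg hr.le hINt.le]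
  have hTτ : 0 < T τ := by
    refine gronwall_pos C τ T (fun t => r * IS t - σ * b * T t * (I t / N t) - μ * T t) hτ0
      (hTcont.mono (Set.Icc_subset_Icc_right hτtf)) (fun t ht => hT t (hIoosub ht)) ?_ hT0 τ hτself
    intro t ht
    obtain ⟨hSt, hEt, hISt, hINt, hTt⟩ := hposIoo t ht
    obtain ⟨hq0, hq1⟩ := hq t ht
    nlinarith [mul_nonneg (mul_nonneg (mul_nonneg hσ0.le hb.le) hTt.le) (sub_nonneg.2 hq1),
      mul_nonneg hr.le hISt.le, mul_nonneg hb.le hTt.le,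
      mul_nonneg (mul_nonneg hp hb.le) hTt.le, mul_nonneg hk.le hTt.le,
      mul_nonneg hr.le hTt.le, mul_nonneg hd.le hTt.le]
  have := ((hmemBad τ).1 hτmem).2
  rcases this with h | h | h | h | h <;> linarith
end

section
/- Let b, μ, k > 0, p > 0, let P < 0, let R₀ < 1, set Q = −((μ+k)·μ/(p·b²))·(R₀ − 1) and R_P = 1 − p·b²·P²/(4·(μ+k)·μ), and assume R₀ > R_P. Then the quadratic equation x² + P·x + Q = 0 has exactly two distinct roots, and both are strictly positive. (This is the two-endemic-equilibria case of the endemic-equilibrium theorem for α = 0.) -/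
/-!
The constant term `Q` is positive because `R₀ < 1`, and the discriminant factors as
`P² - 4Q = 4(μ+k)μ/(p b²) · (R₀ - R_P)`, so it is positive because `R₀ > R_P`. Hence there are
two distinct real roots; their product `Q` and their sum `-P` are both positive, so both roots are.
-/

theorem exists_ne_roots_of_discrim_pos {P Q : ℝ} (hD : 0 < discrim 1 P Q) :
    ∃ x y : ℝ, x ≠ y ∧ x + y = -P ∧ x * y = Q ∧
      ∀ z : ℝ, z ^ 2 + P * z + Q = 0 ↔ z = x ∨ z = y := by
  set s := √(discrim 1 P Q)
  have hs : discrim 1 P Q = s * s := (Real.mul_self_sqrt hD.le).symm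
  have hs_pos : 0 < s := Real.sqrt_pos.mpr hD
  refine ⟨(-P + s) / (2 * 1), (-P - s) / (2 * 1), by intro h; linarith, by ring, ?_, fun z => ?_⟩
  · rw [discrim] at hs
    linear_combination hs / 4
  · rw [← quadratic_eq_zero_iff one_ne_zero hs z]
    ring_nf

theorem pos_and_pos_of_add_pos_of_mul_pos {α : Type*} [Ring α] [LinearOrder α]
    [IsStrictOrderedRing α] {x y : α} (hsum : 0 < x + y) (hprod : 0 < x * y) :
    0 < x ∧ 0 < y := by
  rcases pos_and_pos_or_neg_and_neg_of_mul_pos hprod with h | ⟨hx, hy⟩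
  · exact h
  · exact absurd hsum (add_neg hx hy).asymm

theorem endemic_discrim_eq {b μ k p P R0 Q RP : ℝ} (hb : b ≠ 0) (hμ : μ ≠ 0) (hμk : μ + k ≠ 0)
    (hp : p ≠ 0) (hQ : Q = -((μ + k) * μ / (p * b ^ 2)) * (R0 - 1))
    (hRP : RP = 1 - p * b ^ 2 * P ^ 2 / (4 * (μ + k) * μ)) :
    discrim 1 P Q = 4 * ((μ + k) * μ / (p * b ^ 2)) * (R0 - RP) := by
  subst hQ hRP
  rw [discrim]
  field_simp
  ring

/-- The two-endemic-equilibria case for `α = 0`: if `P < 0`, `R₀ < 1` and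
`R₀ > R_P`, the endemic quadratic has exactly two distinct roots, both
strictly positive. -/
theorem two_endemic_equilibria
    (b μ k p : ℝ) (hb : 0 < b) (hμ : 0 < μ) (hk : 0 < k) (hp : 0 < p)
    (P R0 Q RP : ℝ) (hPneg : P < 0) (hR0lt : R0 < 1)
    (hQ : Q = -((μ + k) * μ / (p * b ^ 2)) * (R0 - 1))
    (hRP : RP = 1 - p * b ^ 2 * P ^ 2 / (4 * (μ + k) * μ))
    (hgt : RP < R0) :
    ∃ x y : ℝ, x ≠ y ∧ 0 < x ∧ 0 < y ∧
      x ^ 2 + P * x + Q = 0 ∧ y ^ 2 + P * y + Q = 0 ∧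
      ∀ z : ℝ, z ^ 2 + P * z + Q = 0 → z = x ∨ z = y := by
  have hc : 0 < (μ + k) * μ / (p * b ^ 2) := by positivity
  have hQ_pos : 0 < Q := by rw [hQ]; nlinarith
  have hD : 0 < discrim 1 P Q := by
    rw [endemic_discrim_eq hb.ne' hμ.ne' (by positivity) hp.ne' hQ hRP]
    nlinarith
  obtain ⟨x, y, hxy, hsum, hprod, hroots⟩ := exists_ne_roots_of_discrim_pos hD
  obtain ⟨hx, hy⟩ := pos_and_pos_of_add_pos_of_mul_pos (by linarith) (hprod ▸ hQ_pos)
  exact ⟨x, y, hxy, hx, hy, (hroots x).2 (.inl rfl), (hroots y).2 (.inr rfl),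
    fun z hz => (hroots z).1 hz⟩
end

section
/- Let b, μ, k > 0, p > 0, let P < 0, let R₀ < 1, set Q = −((μ+k)·μ/(p·b²))·(R₀ − 1) and R_P = 1 − p·b²·P²/(4·(μ+k)·μ), and assume R₀ = R_P. Then the quadratic equation x² + P·x + Q = 0 has exactly one real root, namely x = −P/2, and this root is strictly positive. (This is the unique-endemic-equilibrium boundary case of the endemic-equilibrium theorem for α = 0.) -/
/-- The boundary case `R₀ = R_P` for `α = 0`: the endemic quadratic has
exactly one real root, namely `x = −P/2`, and this root is strictly
positive. -/
theorem one_endemic_equilibrium_boundary_case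
    (b μ k p : ℝ) (hb : 0 < b) (hμ : 0 < μ) (hk : 0 < k) (hp : 0 < p)
    (P R0 Q RP : ℝ) (hPneg : P < 0) (hR0lt : R0 < 1)
    (hQ : Q = -((μ + k) * μ / (p * b ^ 2)) * (R0 - 1))
    (hRP : RP = 1 - p * b ^ 2 * P ^ 2 / (4 * (μ + k) * μ))
    (heq : R0 = RP) :
    (∀ x : ℝ, x ^ 2 + P * x + Q = 0 ↔ x = -P / 2) ∧ 0 < -P / 2 := by
  have hμk : (μ + k) ≠ 0 := by positivity
  have hpb : p * b ^ 2 ≠ 0 := by positivity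
  have hμ' : μ ≠ 0 := ne_of_gt hμ
  have hQval : Q = P ^ 2 / 4 := by
    rw [hQ, heq, hRP]
    field_simp
    ring
  constructor
  · intro x
    constructor
    · intro h
      have h2 : (x + P / 2) ^ 2 = 0 := by rw [hQval] at h; nlinarith
      have := pow_eq_zero_iff (n := 2) (by norm_num) |>.mp h2
      linarith
    · intro h; rw [h, hQval]; ring
  · linarith
end

section
/- Let b, μ, k > 0, p > 0, let P ∈ ℝ, let R₀ ∈ ℝ, set Q = −((μ+k)·μ/(p·b²))·(R₀ − 1) and R_P = 1 − p·b²·P²/(4·(μ+k)·μ), and assume R₀ < R_P. Then the quadratic equation x² + P·x + Q = 0 has no real roots; in particular it has no positive root. (This is the no-endemic-equilibrium case of the endemic-equilibrium theorem for α = 0.) -/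
theorem quadratic_ne_zero_of_discrim_neg {K : Type*} [Field K] [LinearOrder K] [IsStrictOrderedRing K]
    {a b c : K} (h : discrim a b c < 0) (x : K) : a * (x * x) + b * x + c ≠ 0 :=
  quadratic_ne_zero_of_discrim_ne_sq (fun s hs => (sq_nonneg s).not_gt (hs ▸ h)) x

/-- With `c = (μ + k) μ` and `d = p b²`, the threshold is `R_P` and the constant term is `Q`. -/
theorem discrim_neg_of_lt_threshold {c d P R₀ : ℝ} (hc : 0 < c) (hd : 0 < d)
    (h : R₀ < 1 - d * P ^ 2 / (4 * c)) : discrim 1 P (-(c / d) * (R₀ - 1)) < 0 := by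
  have hP : d * P ^ 2 < 4 * c * (1 - R₀) := by
    rw [← div_lt_iff₀' (by positivity)]
    linarith
  have hQ : 4 * (-(c / d) * (R₀ - 1)) = 4 * c * (1 - R₀) / d := by
    field_simp
    ring
  rw [discrim, mul_one, hQ, sub_neg, lt_div_iff₀' hd]
  exact hP

/-- The no-endemic-equilibrium case for `α = 0`: if `R₀ < R_P`, the endemic
quadratic `x² + P·x + Q` has no real roots; in particular no positive root. -/
theorem no_endemic_equilibrium
    (b μ k p : ℝ) (hb : 0 < b) (hμ : 0 < μ) (hk : 0 < k) (hp : 0 < p)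
    (P R0 Q RP : ℝ)
    (hQ : Q = -((μ + k) * μ / (p * b ^ 2)) * (R0 - 1))
    (hRP : RP = 1 - p * b ^ 2 * P ^ 2 / (4 * (μ + k) * μ))
    (hlt : R0 < RP) :
    (∀ x : ℝ, x ^ 2 + P * x + Q ≠ 0) ∧
    ¬ ∃ x : ℝ, 0 < x ∧ x ^ 2 + P * x + Q = 0 := by
  rw [hRP, mul_assoc 4] at hlt
  have hdiscrim : discrim 1 P Q < 0 :=
    hQ ▸ discrim_neg_of_lt_threshold (by positivity) (by positivity) hlt
  have hroot (x : ℝ) : x ^ 2 + P * x + Q ≠ 0 := by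
    simpa [sq] using quadratic_ne_zero_of_discrim_neg hdiscrim x
  exact ⟨hroot, fun ⟨x, _, hx⟩ => hroot x hx⟩
end
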